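/- Let N = (L_1, M_1), …, (L_r, M_r) (r ≥ 2) be a canonical Newton-polygon datum, so all L_i, M_i are positive rationals and L_1/M_1 < ⋯ < L_r/M_r. Then its reduction R(N) = (L'_1, M'_1), …, (L'_{r−1}, M'_{r−1}) is again a canonical Newton-polygon datum: all L'_i, M'_i are positive and L'_1/M'_1 < ⋯ < L'_{r−1}/M'_{r−1}. Moreover L'_i/M'_i > L_{i+1}/M_{i+1} for every 1 ≤ i ≤ r−1, and 1 + ht(R(N)) = (1 + ht(N))/(1 + M_1). -/
import Mathlib


/-- A canonical Newton-polygon datum with `r` edges: a pair of `1`-indexed sequences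
`(L, M)` of positive rationals with strictly increasing inclinations `L k / M k`. -/
def IsCanonicalNP (p : (ℕ → ℚ) × (ℕ → ℚ)) (r : ℕ) : Prop :=
  (∀ k, 1 ≤ k → k ≤ r → 0 < p.1 k ∧ 0 < p.2 k) ∧
  ∀ k, 1 ≤ k → k < r → p.1 k / p.2 k < p.1 (k + 1) / p.2 (k + 1)

/-- The height `ht(N) = M_1 + ⋯ + M_r` of a Newton-polygon datum with `r` edges. -/
def htNP (p : (ℕ → ℚ) × (ℕ → ℚ)) (r : ℕ) : ℚ := ∑ k ∈ Finset.Icc 1 r, p.2 k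

/-- The reduction `R(N)`, with `L'_i = L_{i+1} − (L_1/(1+M_1))·M_{i+1}` and
`M'_i = M_{i+1}/(1+M_1)`. -/
def redNP (p : (ℕ → ℚ) × (ℕ → ℚ)) : (ℕ → ℚ) × (ℕ → ℚ) :=
  (fun i => p.1 (i + 1) - (p.1 1 / (1 + p.2 1)) * p.2 (i + 1),
   fun i => p.2 (i + 1) / (1 + p.2 1))

/-- The reduction of a canonical Newton-polygon datum with `r ≥ 2` edges
is again a canonical Newton-polygon datum, with `r − 1` edges; moreover
`L'_i/M'_i > L_{i+1}/M_{i+1}` for `1 ≤ i ≤ r−1`, and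
`1 + ht(R(N)) = (1 + ht(N))/(1 + M_1)`. -/
theorem reduction_is_canonical
    (p : (ℕ → ℚ) × (ℕ → ℚ)) (r : ℕ) (hr : 2 ≤ r) (hc : IsCanonicalNP p r) :
    IsCanonicalNP (redNP p) (r - 1) ∧
    (∀ i, 1 ≤ i → i ≤ r - 1 →
      p.1 (i + 1) / p.2 (i + 1) < (redNP p).1 i / (redNP p).2 i) ∧
    1 + htNP (redNP p) (r - 1) = (1 + htNP p r) / (1 + p.2 1) := by

  obtain ⟨hpos, hinc⟩ := hc
  have hL1 : 0 < p.1 1 := (hpos 1 le_rfl (by omega)).1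
  have hM1 : 0 < p.2 1 := (hpos 1 le_rfl (by omega)).2
  have hd : (0:ℚ) < 1 + p.2 1 := by linarith
  have mono : ∀ b a, 1 ≤ a → a < b → b ≤ r → p.1 a / p.2 a < p.1 b / p.2 b := by
    intro b
    induction b with
    | zero => intro a h1 h2 h3; omega
    | succ n ih =>
      intro a h1 h2 h3
      rcases eq_or_lt_of_le (Nat.lt_succ_iff.mp h2) with h | h
      · subst h; exact hinc a h1 (by omega)
      · exact lt_trans (ih a h1 h (by omega)) (hinc n (by omega) (by omega))
  -- basic positivity for indices i+1, 1 ≤ i ≤ r-1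
  have hpos' : ∀ i, 1 ≤ i → i ≤ r - 1 → 0 < p.1 (i+1) ∧ 0 < p.2 (i+1) := by
    intro i h1 h2; exact hpos (i+1) (by omega) (by omega)
  have hc' : p.1 1 / (1 + p.2 1) < p.1 1 / p.2 1 :=
    div_lt_div_of_pos_left hL1 hM1 (by linarith)
  have hslope : ∀ i, 1 ≤ i → i ≤ r - 1 →
      p.1 1 / (1 + p.2 1) < p.1 (i+1) / p.2 (i+1) := by
    intro i h1 h2
    exact lt_trans hc' (mono (i+1) 1 le_rfl (by omega) (by omega))
  have hLpos : ∀ i, 1 ≤ i → i ≤ r - 1 → 0 < (redNP p).1 i := by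
    intro i h1 h2
    have hM : 0 < p.2 (i+1) := (hpos' i h1 h2).2
    have := (lt_div_iff₀ hM).mp (hslope i h1 h2)
    simpa [redNP] using by linarith
  have hMpos : ∀ i, 1 ≤ i → i ≤ r - 1 → 0 < (redNP p).2 i := by
    intro i h1 h2
    exact div_pos (hpos' i h1 h2).2 hd
  have key : ∀ i, 1 ≤ i → i ≤ r - 1 →
      (redNP p).1 i / (redNP p).2 i
        = (1 + p.2 1) * (p.1 (i+1) / p.2 (i+1)) - p.1 1 := by
    intro i h1 h2
    have hM : p.2 (i+1) ≠ 0 := ne_of_gt (hpos' i h1 h2).2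
    have hd' : (1 + p.2 1) ≠ 0 := ne_of_gt hd
    simp only [redNP]
    field_simp
  refine ⟨⟨fun k h1 h2 => ⟨hLpos k h1 h2, hMpos k h1 h2⟩, ?_⟩, ?_, ?_⟩
  · intro k h1 h2
    rw [key k h1 (by omega), key (k+1) (by omega) (by omega)]
    have hm := mono (k+2) (k+1) (by omega) (by omega) (by omega)
    nlinarith [hm, hd]
  · intro i h1 h2
    rw [key i h1 h2]
    have hs := mono (i+1) 1 le_rfl (by omega) (by omega)
    have hM : 0 < p.2 (i+1) := (hpos' i h1 h2).2
    have hL : p.1 1 < p.2 1 * (p.1 (i+1) / p.2 (i+1)) := by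
      have := (div_lt_iff₀ hM1).mp hs
      calc p.1 1 = p.1 1 / p.2 1 * p.2 1 := by field_simp
        _ < p.1 (i+1) / p.2 (i+1) * p.2 1 := by
            exact mul_lt_mul_of_pos_right hs hM1
        _ = p.2 1 * (p.1 (i+1) / p.2 (i+1)) := by ring
    have hexp : (1 + p.2 1) * (p.1 (i+1) / p.2 (i+1))
        = p.1 (i+1) / p.2 (i+1) + p.2 1 * (p.1 (i+1) / p.2 (i+1)) := by ring
    linarith
  · have hshift : ∑ i ∈ Finset.Icc 1 (r-1), p.2 (i+1) = ∑ k ∈ Finset.Icc 2 r, p.2 k := by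
      have : Finset.Icc 2 r = (Finset.Icc 1 (r-1)).map (addRightEmbedding 1) := by
        rw [Finset.map_add_right_Icc]
        congr 1
        omega
      rw [this, Finset.sum_map]
      rfl
    have hsplit : ∑ k ∈ Finset.Icc 1 r, p.2 k = p.2 1 + ∑ k ∈ Finset.Icc 2 r, p.2 k := by
      have : Finset.Icc 1 r = insert 1 (Finset.Icc 2 r) := by
        ext x; simp only [Finset.mem_Icc, Finset.mem_insert]; omega
      rw [this, Finset.sum_insert (by simp)]
    have hsum : htNP (redNP p) (r-1) = (∑ k ∈ Finset.Icc 2 r, p.2 k) / (1 + p.2 1) := by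
      simp only [htNP, redNP]
      rw [← Finset.sum_div, hshift]
    rw [hsum, htNP, hsplit]
    field_simp
    ring
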